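/- Let X = ⋃_{i≥1} Y_i ⊆ ℓ² be the Hilbert flying saucer, Y_i = { x ∈ ℓ² : ‖x‖ ≤ i, x_j = 0 for j < i }. Then X is a closed subset of ℓ², and any bounded subset of X is contained in a finite union Y_1 ∪ ⋯ ∪ Y_N. -/
import Mathlib


/-- `ℓ²`, the Hilbert space of square-summable real sequences. -/
noncomputable abbrev ell2 : Type := lp (fun _ : ℕ => ℝ) 2

/-- The disk `Y_i` (here indexed from `0`, so `saucerY i` is the paper's `Y_{i+1}`):
elements of norm at most `i+1` whose first `i` coordinates vanish. -/
def saucerY (i : ℕ) : Set ell2 :=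
  {x : ell2 | ‖x‖ ≤ (i : ℝ) + 1 ∧ ∀ j < i, x j = 0}

/-- The Hilbert flying saucer `X = ⋃ᵢ Yᵢ ⊆ ℓ²`. -/
def saucer : Set ell2 := ⋃ i : ℕ, saucerY i

lemma eval_lipschitz (j : ℕ) : LipschitzWith 1 (fun x : ell2 => x j) := by
  refine LipschitzWith.of_dist_le_mul fun x y => ?_
  rw [NNReal.coe_one, one_mul, dist_eq_norm, dist_eq_norm]
  have h := lp.norm_apply_le_norm (p := (2 : ENNReal)) (by norm_num) (x - y) j
  simpa using h

lemma saucerY_closed (i : ℕ) : IsClosed (saucerY i) := by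
  have : saucerY i = {x : ell2 | ‖x‖ ≤ (i : ℝ) + 1} ∩ ⋂ j ∈ Set.Iio i, {x : ell2 | x j = 0} := by
    ext x; simp [saucerY]
  rw [this]
  refine (isClosed_le continuous_norm continuous_const).inter ?_
  refine isClosed_biInter fun j _ => ?_
  exact isClosed_eq (eval_lipschitz j).continuous continuous_const

/-- The flying saucer is a closed subset of `ℓ²`, and every bounded subset of it is
contained in a finite union `Y_1 ∪ ⋯ ∪ Y_N`. -/
theorem stmt_10 :
    IsClosed saucer ∧
    ∀ s : Set ell2, s ⊆ saucer → Bornology.IsBounded s →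
      ∃ N : ℕ, s ⊆ ⋃ i ≤ N, saucerY i := by
  constructor
  · rw [← closure_subset_iff_isClosed]
    intro x hx
    by_cases hx0 : x = 0
    · refine Set.mem_iUnion.2 ⟨0, ?_, fun j hj => absurd hj (Nat.not_lt_zero j)⟩
      simp [hx0]
    · obtain ⟨k, hk⟩ : ∃ k, x k ≠ 0 := by
        by_contra h
        push_neg at h
        exact hx0 (lp.ext (funext h))
      have hC : IsClosed (⋃ i ∈ Set.Iic k, saucerY i) :=
        (Set.finite_Iic k).isClosed_biUnion fun i _ => saucerY_closed i
      have hxC : x ∈ ⋃ i ∈ Set.Iic k, saucerY i := by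
        rw [← hC.closure_eq]
        rw [Metric.mem_closure_iff] at hx ⊢
        intro ε hε
        have hε' : min ε ‖x k‖ > 0 := lt_min hε (by simpa using hk)
        obtain ⟨y, hy, hdy⟩ := hx _ hε'
        obtain ⟨i, hyi⟩ := Set.mem_iUnion.1 hy
        refine ⟨y, ?_, lt_of_lt_of_le hdy (min_le_left _ _)⟩
        have hik : i ≤ k := by
          by_contra hik
          push_neg at hik
          have hyk : y k = 0 := hyi.2 k hik
          have : ‖x k‖ ≤ dist x y := by
            have := eval_lipschitz k |>.dist_le_mul x y
            simpa [hyk] using this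
          exact absurd (lt_of_lt_of_le hdy (min_le_right _ _)) (not_lt.2 this)
        exact Set.mem_biUnion hik hyi
      obtain ⟨i, _, hxi⟩ := Set.mem_iUnion₂.1 hxC
      exact Set.mem_iUnion.2 ⟨i, hxi⟩
  · intro s hs hb
    obtain ⟨R, hR⟩ := hb.exists_norm_le
    refine ⟨⌈R⌉₊, fun x hx => ?_⟩
    obtain ⟨i, hxi⟩ := Set.mem_iUnion.1 (hs hx)
    by_cases hi : i ≤ ⌈R⌉₊
    · exact Set.mem_biUnion hi hxi
    · push_neg at hi
      refine Set.mem_biUnion (show ⌈R⌉₊ ≤ ⌈R⌉₊ from le_rfl) ⟨?_, fun j hj => hxi.2 j (hj.trans hi)⟩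
      calc ‖x‖ ≤ R := hR x hx
        _ ≤ ⌈R⌉₊ := Nat.le_ceil R
        _ ≤ (⌈R⌉₊ : ℝ) + 1 := by linarith
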